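/- Let {U_k}_{k∈[t]} be unitaries on A⊗B defining γ-MUBs with d^{−γ/2} ≤ 1/(16 t d_B), where d = d_A d_B. For y ∈ [d_A] let F_y be the span of {U_k†|y⟩|b⟩ : k ∈ [t], b ∈ [d_B]}. Then for any x ≠ y in [d_A], any k₀ ∈ [t], and b₀ ∈ [d_B], the squared projection satisfies tr[Π_{F_y} U_{k₀}†|x⟩|b₀⟩⟨x|⟨b₀|U_{k₀}] ≤ 2√32·(t d_B)²·d^{−γ}. -/

import Mathlib

open Matrix
open scoped BigOperators

/-- The vector `U†|p⟩` in `ℂ^{d_A} ⊗ ℂ^{d_B}`, i.e. the column of `U†` indexed by the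
computational basis element `|p⟩ = |a⟩|b⟩`. -/
noncomputable def adjCol (dA dB : ℕ)
    (U : Matrix (Fin dA × Fin dB) (Fin dA × Fin dB) ℂ) (p : Fin dA × Fin dB) :
    EuclideanSpace ℂ (Fin dA × Fin dB) :=
  WithLp.toLp 2 (Uᴴ.mulVec (EuclideanSpace.single p (1 : ℂ)))

/-!
Write the projection `p` of `v` onto `F_y` as `∑ cᵢ wᵢ`, where the `wᵢ = U_k†|y⟩|b⟩` are unit
vectors with pairwise overlaps at most `ε = d^{-γ/2}` and `n = t d_B` of them. Expanding the Gram
form gives `‖p‖² ≥ (1 - ε n) ∑ |cᵢ|²`, while `‖p‖² = ⟪p, v⟫ ≤ ε ∑ |cᵢ| ≤ ε √(n ∑ |cᵢ|²)` because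
`v` also overlaps every `wᵢ` by at most `ε` (this is where `x ≠ y` enters). Hence
`‖p‖² (1 - ε n) ≤ n ε²`, and `ε n ≤ 1/16` yields `‖p‖² ≤ (16/15) n ε²`, well below the
claimed `2√32 n² ε²`; no Gram–Schmidt perturbation estimate is needed.
-/

open scoped InnerProductSpace

section AlmostOrthonormal

variable {𝕜 E ι : Type*} [RCLike 𝕜] [NormedAddCommGroup E] [InnerProductSpace 𝕜 E]
  {w : ι → E} {ε : ℝ}

theorem norm_inner_sum_smul_le [Fintype ι] {v : E} (hv : ∀ i, ‖⟪w i, v⟫_𝕜‖ ≤ ε) (c : ι → 𝕜) :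
    ‖⟪∑ i, c i • w i, v⟫_𝕜‖ ≤ ε * ∑ i, ‖c i‖ :=
  calc ‖⟪∑ i, c i • w i, v⟫_𝕜‖ ≤ ∑ i, ‖⟪c i • w i, v⟫_𝕜‖ := by
        rw [sum_inner]; exact norm_sum_le _ _
    _ = ∑ i, ‖c i‖ * ‖⟪w i, v⟫_𝕜‖ := by simp only [inner_smul_left, norm_mul, RCLike.norm_conj]
    _ ≤ ∑ i, ‖c i‖ * ε := by gcongr; exact hv _
    _ = ε * ∑ i, ‖c i‖ := by rw [Finset.mul_sum]; simp only [mul_comm]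

/-- The diagonal terms are shifted by `ε ‖c i‖²` so that the error terms sum to
`ε (∑ i, ‖c i‖)²`. -/
theorem le_re_conj_mul_inner [DecidableEq ι] (hw : ∀ i, ‖w i‖ = 1)
    (hoff : Pairwise fun i j ↦ ‖⟪w i, w j⟫_𝕜‖ ≤ ε) (c : ι → 𝕜) (i j : ι) :
    (if i = j then ‖c i‖ ^ 2 + ε * (‖c i‖ * ‖c j‖) else 0) - ε * (‖c i‖ * ‖c j‖) ≤
      RCLike.re (starRingEnd 𝕜 (c i) * (c j * ⟪w i, w j⟫_𝕜)) := by
  by_cases hij : i = j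
  · subst hij
    rw [if_pos rfl, inner_self_eq_norm_sq_to_K, hw, add_sub_cancel_right]
    simp only [RCLike.ofReal_one, one_pow, mul_one, RCLike.conj_mul, ← RCLike.ofReal_pow,
      RCLike.ofReal_re, le_refl]
  · rw [if_neg hij, zero_sub, neg_le]
    calc -RCLike.re (starRingEnd 𝕜 (c i) * (c j * ⟪w i, w j⟫_𝕜))
        ≤ ‖starRingEnd 𝕜 (c i) * (c j * ⟪w i, w j⟫_𝕜)‖ := by
          simpa using RCLike.re_le_norm (-(starRingEnd 𝕜 (c i) * (c j * ⟪w i, w j⟫_𝕜)))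
      _ ≤ ‖c i‖ * (‖c j‖ * ε) := by
          rw [norm_mul, norm_mul, RCLike.norm_conj]; gcongr; exact hoff hij
      _ = ε * (‖c i‖ * ‖c j‖) := by ring

theorem sum_norm_sq_mul_le_norm_sq_sum_smul [Fintype ι] (hε : 0 ≤ ε) (hw : ∀ i, ‖w i‖ = 1)
    (hoff : Pairwise fun i j ↦ ‖⟪w i, w j⟫_𝕜‖ ≤ ε) (c : ι → 𝕜) :
    (∑ i, ‖c i‖ ^ 2) * (1 - ε * Fintype.card ι) ≤ ‖∑ i, c i • w i‖ ^ 2 := by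
  classical
  have hgram : ‖∑ i, c i • w i‖ ^ 2 =
      ∑ i, ∑ j, RCLike.re (starRingEnd 𝕜 (c i) * (c j * ⟪w i, w j⟫_𝕜)) := by
    rw [@norm_sq_eq_re_inner 𝕜, sum_inner, map_sum]
    simp only [inner_sum, inner_smul_left, inner_smul_right, map_sum, mul_left_comm (c _)]
  have hsum := Finset.sum_le_sum fun i (_ : i ∈ Finset.univ) ↦
    Finset.sum_le_sum fun j (_ : j ∈ Finset.univ) ↦ le_re_conj_mul_inner hw hoff c i j
  simp only [Finset.sum_sub_distrib, Finset.sum_ite_eq, Finset.mem_univ, if_true,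
    Finset.sum_add_distrib, ← Finset.mul_sum, ← Finset.sum_mul, ← pow_two] at hsum
  have hcs : (∑ i, ‖c i‖) ^ 2 ≤ Fintype.card ι * ∑ i, ‖c i‖ ^ 2 := sq_sum_le_card_mul_sum_sq
  rw [hgram]
  nlinarith [mul_le_mul_of_nonneg_left hcs hε,
    Finset.sum_nonneg fun i (_ : i ∈ Finset.univ) ↦ sq_nonneg ‖c i‖]

theorem norm_sq_starProjection_span_mul_le [Fintype ι]
    [(Submodule.span 𝕜 (Set.range w)).HasOrthogonalProjection] (hε : 0 ≤ ε)
    (hw : ∀ i, ‖w i‖ = 1) (hoff : Pairwise fun i j ↦ ‖⟪w i, w j⟫_𝕜‖ ≤ ε) {v : E}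
    (hv : ∀ i, ‖⟪w i, v⟫_𝕜‖ ≤ ε) :
    ‖(Submodule.span 𝕜 (Set.range w)).starProjection v‖ ^ 2 * (1 - ε * Fintype.card ι) ≤
      Fintype.card ι * ε ^ 2 := by
  set K := Submodule.span 𝕜 (Set.range w)
  set n : ℝ := (Fintype.card ι : ℝ)
  obtain ⟨c, hc⟩ := (Submodule.mem_span_range_iff_exists_fun 𝕜).mp (K.starProjection_apply_mem v)
  set P := ‖K.starProjection v‖ ^ 2
  set S := ∑ i, ‖c i‖ ^ 2
  set T := ∑ i, ‖c i‖
  have hupper : P ≤ ε * T :=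
    calc P = RCLike.re ⟪K.starProjection v, v⟫_𝕜 := (K.re_inner_starProjection_eq_normSq v).symm
      _ ≤ ‖⟪K.starProjection v, v⟫_𝕜‖ := RCLike.re_le_norm _
      _ ≤ ε * T := hc ▸ norm_inner_sum_smul_le hv c
  have hlower : S * (1 - ε * n) ≤ P := by
    simpa only [hc] using sum_norm_sq_mul_le_norm_sq_sum_smul hε hw hoff c
  have hcs : T ^ 2 ≤ n * S := sq_sum_le_card_mul_sum_sq
  rcases le_or_gt (1 - ε * n) 0 with hbig | hsmall
  · nlinarith [sq_nonneg ‖K.starProjection v‖, sq_nonneg ε]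
  · have hP : 0 ≤ P := sq_nonneg _
    have key : P * (P * (1 - ε * n)) ≤ P * (n * ε ^ 2) :=
      calc P * (P * (1 - ε * n)) = P ^ 2 * (1 - ε * n) := by ring
        _ ≤ (ε * T) ^ 2 * (1 - ε * n) := by gcongr
        _ = ε ^ 2 * T ^ 2 * (1 - ε * n) := by ring
        _ ≤ ε ^ 2 * (n * S) * (1 - ε * n) := by gcongr
        _ = n * ε ^ 2 * (S * (1 - ε * n)) := by ring
        _ ≤ n * ε ^ 2 * P := by gcongr
        _ = P * (n * ε ^ 2) := by ring
    rcases hP.eq_or_lt with hP0 | hPpos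
    · rw [← hP0, zero_mul]; positivity
    · exact le_of_mul_le_mul_left key hPpos

end AlmostOrthonormal

section AdjointColumns

variable {dA dB : ℕ}

theorem inner_adjCol (U V : Matrix (Fin dA × Fin dB) (Fin dA × Fin dB) ℂ)
    (p q : Fin dA × Fin dB) :
    ⟪adjCol dA dB U p, adjCol dA dB V q⟫_ℂ = (U * Vᴴ) p q := by
  simp [adjCol, PiLp.inner_apply, Matrix.mul_apply, mul_comm]

theorem inner_adjCol_self {U : Matrix (Fin dA × Fin dB) (Fin dA × Fin dB) ℂ}
    (hU : U ∈ Matrix.unitaryGroup (Fin dA × Fin dB) ℂ) (p q : Fin dA × Fin dB) :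
    ⟪adjCol dA dB U p, adjCol dA dB U q⟫_ℂ = (1 : Matrix _ _ ℂ) p q := by
  rw [inner_adjCol, ← Matrix.star_eq_conjTranspose, Matrix.mem_unitaryGroup_iff.mp hU]

theorem norm_adjCol {U : Matrix (Fin dA × Fin dB) (Fin dA × Fin dB) ℂ}
    (hU : U ∈ Matrix.unitaryGroup (Fin dA × Fin dB) ℂ) (p : Fin dA × Fin dB) :
    ‖adjCol dA dB U p‖ = 1 := by
  rw [← pow_eq_one_iff_of_nonneg (norm_nonneg _) two_ne_zero, @norm_sq_eq_re_inner ℂ,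
    inner_adjCol_self hU, Matrix.one_apply_eq, RCLike.one_re]

theorem norm_inner_adjCol_le {ι : Type*} {U : ι → Matrix (Fin dA × Fin dB) (Fin dA × Fin dB) ℂ}
    (hU : ∀ k, U k ∈ Matrix.unitaryGroup (Fin dA × Fin dB) ℂ) {ε : ℝ} (hε : 0 ≤ ε)
    (hMUB : ∀ k k', k ≠ k' → ∀ p q, ‖(U k' * (U k)ᴴ) p q‖ ≤ ε)
    {k k' : ι} {p q : Fin dA × Fin dB} (hne : (k, p) ≠ (k', q)) :
    ‖⟪adjCol dA dB (U k) p, adjCol dA dB (U k') q⟫_ℂ‖ ≤ ε := by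
  by_cases hk : k = k'
  · subst hk
    have hpq : p ≠ q := fun h ↦ hne (by rw [h])
    rwa [inner_adjCol_self (hU k), Matrix.one_apply_ne hpq, norm_zero]
  · rw [inner_adjCol]
    exact hMUB k' k (Ne.symm hk) p q

theorem norm_sq_starProjection_span_adjCol_mul_le {ι : Type*} [Fintype ι]
    {U : ι → Matrix (Fin dA × Fin dB) (Fin dA × Fin dB) ℂ}
    (hU : ∀ k, U k ∈ Matrix.unitaryGroup (Fin dA × Fin dB) ℂ) {ε : ℝ} (hε : 0 ≤ ε)
    (hMUB : ∀ k k', k ≠ k' → ∀ p q, ‖(U k' * (U k)ᴴ) p q‖ ≤ ε)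
    {x y : Fin dA} (hxy : x ≠ y) (k₀ : ι) (b₀ : Fin dB) :
    ‖(Submodule.span ℂ (Set.range fun kb : ι × Fin dB ↦ adjCol dA dB (U kb.1) (y, kb.2))
        ).starProjection (adjCol dA dB (U k₀) (x, b₀))‖ ^ 2 *
        (1 - ε * (Fintype.card ι * dB)) ≤ Fintype.card ι * dB * ε ^ 2 := by
  have hw : ∀ i : ι × Fin dB, ‖adjCol dA dB (U i.1) (y, i.2)‖ = 1 :=
    fun i ↦ norm_adjCol (hU i.1) _
  have hoff : Pairwise fun i j : ι × Fin dB ↦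
      ‖⟪adjCol dA dB (U i.1) (y, i.2), adjCol dA dB (U j.1) (y, j.2)⟫_ℂ‖ ≤ ε :=
    fun i j hij ↦ norm_inner_adjCol_le hU hε hMUB (by simpa [Prod.ext_iff] using hij)
  have hv : ∀ i : ι × Fin dB,
      ‖⟪adjCol dA dB (U i.1) (y, i.2), adjCol dA dB (U k₀) (x, b₀)⟫_ℂ‖ ≤ ε :=
    fun i ↦ norm_inner_adjCol_le hU hε hMUB (by simp [Ne.symm hxy])
  have := norm_sq_starProjection_span_mul_le hε hw hoff hv
  rwa [Fintype.card_prod, Fintype.card_fin, Nat.cast_mul] at this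

end AdjointColumns

theorem stmt13_general (dA dB t : ℕ) (γ : ℝ)
    (U : Fin t → Matrix (Fin dA × Fin dB) (Fin dA × Fin dB) ℂ)
    (hU : ∀ k, U k ∈ Matrix.unitaryGroup (Fin dA × Fin dB) ℂ)
    (hMUB : ∀ k k', k ≠ k' → ∀ p q : Fin dA × Fin dB,
      ‖(U k' * (U k)ᴴ) p q‖ ≤ (((dA : ℝ) * dB)) ^ (-(γ / 2)))
    (hsmall : (((dA : ℝ) * dB)) ^ (-(γ / 2)) ≤ 1 / (16 * t * dB))
    (x y : Fin dA) (hxy : x ≠ y) (k₀ : Fin t) (b₀ : Fin dB) :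
    ‖(Submodule.orthogonalProjectionOnto
        (Submodule.span ℂ (Set.range fun kb : Fin t × Fin dB =>
          adjCol dA dB (U kb.1) (y, kb.2)))
        (adjCol dA dB (U k₀) (x, b₀)) : EuclideanSpace ℂ (Fin dA × Fin dB))‖ ^ 2
      ≤ 2 * Real.sqrt 32 * ((t : ℝ) * dB) ^ 2 * (((dA : ℝ) * dB)) ^ (-γ) := by
  set ε := ((dA : ℝ) * dB) ^ (-(γ / 2))
  have hε : 0 ≤ ε := by positivity
  have hproj := norm_sq_starProjection_span_adjCol_mul_le hU hε hMUB hxy k₀ b₀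
  rw [Fintype.card_fin] at hproj
  set n : ℝ := t * dB
  have hεn : ε * n ≤ 1 / 16 := by
    rcases (show (0 : ℝ) ≤ n by positivity).eq_or_lt with hn | hn
    · rw [← hn]; norm_num
    · calc ε * n ≤ 1 / (16 * n) * n := by gcongr; rwa [← mul_assoc]
        _ = 1 / 16 := by field_simp
  have hn : n ≤ n ^ 2 := by simp only [n]; norm_cast; exact Nat.le_self_pow two_ne_zero _
  have hsqrt : (5 : ℝ) ≤ Real.sqrt 32 := Real.le_sqrt_of_sq_le (by norm_num)
  have hε2 : ε ^ 2 = ((dA : ℝ) * dB) ^ (-γ) := by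
    rw [← Real.rpow_natCast, ← Real.rpow_mul (by positivity)]; ring_nf
  have h15 := (mul_le_mul_of_nonneg_left (by linarith : (15 : ℝ) / 16 ≤ 1 - ε * n)
    (sq_nonneg _)).trans hproj
  rw [← hε2, Submodule.coe_orthogonalProjectionOnto_apply]
  calc _ ≤ 16 / 15 * n * ε ^ 2 := by linarith
    _ ≤ 2 * Real.sqrt 32 * n ^ 2 * ε ^ 2 := by gcongr; linarith

/-- Let `{U_k}_{k∈[t]}` be unitaries on `A⊗B` defining `γ`-MUBs with
`d^{−γ/2} ≤ 1/(16 t d_B)` where `d = d_A d_B`.  For `y ∈ [d_A]` let `F_y` be the span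
of `{U_k†|y⟩|b⟩ : k ∈ [t], b ∈ [d_B]}`.  Then for any `x ≠ y` in `[d_A]`, any
`k₀ ∈ [t]` and `b₀ ∈ [d_B]`, the squared norm of the orthogonal projection of
`U_{k₀}†|x⟩|b₀⟩` onto `F_y` (equivalently `tr[Π_{F_y} U_{k₀}†|x,b₀⟩⟨x,b₀|U_{k₀}]`)
is at most `2√32·(t d_B)²·d^{−γ}`. -/
theorem stmt13 (dA dB t : ℕ) (hA : 0 < dA) (hB : 0 < dB) (ht : 0 < t) (γ : ℝ) (hγ : 0 < γ)
    (U : Fin t → Matrix (Fin dA × Fin dB) (Fin dA × Fin dB) ℂ)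
    (hU : ∀ k, U k ∈ Matrix.unitaryGroup (Fin dA × Fin dB) ℂ)
    (hMUB : ∀ k k', k ≠ k' → ∀ p q : Fin dA × Fin dB,
      ‖(U k' * (U k)ᴴ) p q‖ ≤ (((dA : ℝ) * dB)) ^ (-(γ / 2)))
    (hsmall : (((dA : ℝ) * dB)) ^ (-(γ / 2)) ≤ 1 / (16 * t * dB))
    (x y : Fin dA) (hxy : x ≠ y) (k₀ : Fin t) (b₀ : Fin dB) :
    ‖(Submodule.orthogonalProjectionOnto
        (Submodule.span ℂ (Set.range fun kb : Fin t × Fin dB =>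
          adjCol dA dB (U kb.1) (y, kb.2)))
        (adjCol dA dB (U k₀) (x, b₀)) : EuclideanSpace ℂ (Fin dA × Fin dB))‖ ^ 2
      ≤ 2 * Real.sqrt 32 * ((t : ℝ) * dB) ^ 2 * (((dA : ℝ) * dB)) ^ (-γ) :=
  stmt13_general dA dB t γ U hU hMUB hsmall x y hxy k₀ b₀
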